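/- arXiv:2604.14769 — 2 statements merged into one kernel-verified Lean document; each statement's English description precedes it below -/
import Mathlib

section
/- (Exact recovery under the low-rank bottleneck) If W ∈ ℝ^{L×P} is such that its rearranged matrix R(W) ∈ ℝ^{(L·B)×A} has rank at most N, then W admits an exact N-term Kronecker decomposition: there exist templates T₁, …, T_N ∈ ℝ^{1×A} and scalers S₁, …, S_N ∈ ℝ^{L×B} with W = Σ_{i=1}^{N} T_i ⊗ S_i. -/
open Matrix

noncomputable section

/-- Pair-index encoding `(i, j) ↦ j + n·i`, the zero-based form of `(i−1)·n + j`. -/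
def pairIdx {m n : ℕ} (i : Fin m) (j : Fin n) : Fin (m * n) := finProdFinEquiv (i, j)

/-- The rearrangement operator `R : ℝ^{L×(A·B)} → ℝ^{(L·B)×A}` defined entrywise by
`R(W)_{(ℓ−1)B+b, a} = W_{ℓ, (a−1)B+b}`. -/
def rearrange (L A B : ℕ) (W : Matrix (Fin L) (Fin (A * B)) ℝ) :
    Matrix (Fin (L * B)) (Fin A) ℝ := fun r a =>
  W (finProdFinEquiv.symm r).1 (pairIdx a (finProdFinEquiv.symm r).2)

/-- The Kronecker product of a row template `T ∈ ℝ^{1×A}` with a scaler `S ∈ ℝ^{L×B}`: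
`(T ⊗ S)_{ℓ, (a−1)B+b} = T_{1,a} · S_{ℓ,b}`. -/
def kron {L A B : ℕ} (T : Matrix (Fin 1) (Fin A) ℝ) (S : Matrix (Fin L) (Fin B) ℝ) :
    Matrix (Fin L) (Fin (A * B)) ℝ := fun ℓ c =>
  T 0 (finProdFinEquiv.symm c).1 * S ℓ (finProdFinEquiv.symm c).2

/-- The Frobenius norm `‖M‖_F = (Σ_{i,j} M_{ij}²)^{1/2}`. -/
def frobNorm {m n : ℕ} (M : Matrix (Fin m) (Fin n) ℝ) : ℝ :=
  Real.sqrt (∑ i, ∑ j, (M i j) ^ 2)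

/-! A matrix of rank at most `N` factors as `U * V` with inner dimension `N`, so
`R(W) = ∑ᵢ (column i of U) (row i of V)`. Since `R` only permutes entries, each rank-one term
pulls back to a Kronecker product: row `i` of `V` is the template and column `i` of `U`,
reshaped to `L × B`, is the scaler. -/

open Module Submodule

theorem Submodule.exists_fin_le_span_range_of_finrank_le {K V : Type*} [DivisionRing K]
    [AddCommGroup V] [Module K V] (S : Submodule K V) [FiniteDimensional K S] {N : ℕ}
    (hN : finrank K S ≤ N) : ∃ u : Fin N → V, S ≤ span K (Set.range u) := by
  let b := finBasis K S
  refine ⟨Function.extend (Fin.castLE hN) (fun j => (b j : V)) 0, fun x hx => ?_⟩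
  have hx' := apply_mem_span_image_of_mem_span S.subtype (b.mem_span ⟨x, hx⟩)
  refine span_mono ?_ hx'
  rintro _ ⟨_, ⟨j, rfl⟩, rfl⟩
  exact ⟨Fin.castLE hN j, (Fin.castLE_injective hN).extend_apply _ _ j⟩

theorem Matrix.exists_mul_eq_of_rank_le {K m n : Type*} [Field K] [Fintype n]
    (M : Matrix m n K) {N : ℕ} (hM : M.rank ≤ N) :
    ∃ (U : Matrix m (Fin N) K) (V : Matrix (Fin N) n K), U * V = M := by
  rw [rank_eq_finrank_span_cols] at hM
  have := FiniteDimensional.span_of_finite K (Set.finite_range Mᵀ)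
  obtain ⟨u, hu⟩ := (span K (Set.range Mᵀ)).exists_fin_le_span_range_of_finrank_le hM
  have hcol : ∀ a, ∃ c : Fin N → K, ∑ i, c i • u i = Mᵀ a := fun a =>
    (mem_span_range_iff_exists_fun K).mp (hu (subset_span ⟨a, rfl⟩))
  choose c hc using hcol
  refine ⟨of fun ρ i => u i ρ, of fun i a => c a i, ?_⟩
  ext ρ a
  simpa [mul_apply, mul_comm] using congrFun (hc a) ρ

@[simp]
theorem rearrange_apply_pairIdx {L A B : ℕ} (W : Matrix (Fin L) (Fin (A * B)) ℝ) (ℓ : Fin L)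
    (a : Fin A) (b : Fin B) : rearrange L A B W (pairIdx ℓ b) a = W ℓ (pairIdx a b) := by
  simp [rearrange, pairIdx]

@[simp]
theorem kron_apply_pairIdx {L A B : ℕ} (T : Matrix (Fin 1) (Fin A) ℝ)
    (S : Matrix (Fin L) (Fin B) ℝ) (ℓ : Fin L) (a : Fin A) (b : Fin B) :
    kron T S ℓ (pairIdx a b) = T 0 a * S ℓ b := by
  simp [kron, pairIdx]

theorem eq_sum_kron_of_rearrange_eq_mul {L A B N : ℕ} {W : Matrix (Fin L) (Fin (A * B)) ℝ}
    {U : Matrix (Fin (L * B)) (Fin N) ℝ} {V : Matrix (Fin N) (Fin A) ℝ}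
    (h : U * V = rearrange L A B W) :
    W = ∑ i, kron (replicateRow (Fin 1) (V i)) (of fun ℓ b => U (pairIdx ℓ b) i) := by
  ext ℓ c
  obtain ⟨⟨a, b⟩, rfl⟩ : ∃ p : Fin A × Fin B, pairIdx p.1 p.2 = c :=
    finProdFinEquiv.surjective c
  rw [← rearrange_apply_pairIdx W, ← h, Matrix.sum_apply]
  simp [mul_apply, mul_comm]

theorem exists_exact_kron_decomposition_of_rearrange_rank_le_general (L A B N : ℕ)
    (W : Matrix (Fin L) (Fin (A * B)) ℝ)
    (hW : (rearrange L A B W).rank ≤ N) :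
    ∃ (T : Fin N → Matrix (Fin 1) (Fin A) ℝ) (S : Fin N → Matrix (Fin L) (Fin B) ℝ),
      W = ∑ i, kron (T i) (S i) := by
  obtain ⟨U, V, hUV⟩ := (rearrange L A B W).exists_mul_eq_of_rank_le hW
  exact ⟨_, _, eq_sum_kron_of_rearrange_eq_mul hUV⟩

/-- Exact recovery under the low-rank bottleneck: if `R(W)` has rank at
most `N`, then `W` admits an exact `N`-term Kronecker decomposition. -/
theorem exists_exact_kron_decomposition_of_rearrange_rank_le (L A B N : ℕ) (hL : 0 < L)
    (hA : 0 < A) (hB : 0 < B) (hN : 0 < N) (W : Matrix (Fin L) (Fin (A * B)) ℝ)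
    (hW : (rearrange L A B W).rank ≤ N) :
    ∃ (T : Fin N → Matrix (Fin 1) (Fin A) ℝ) (S : Fin N → Matrix (Fin L) (Fin B) ℝ),
      W = ∑ i, kron (T i) (S i) :=
  exists_exact_kron_decomposition_of_rearrange_rank_le_general L A B N W hW
end
end

section
/- (Theorem: Universal Approximation under Kronecker Constraints) Let f be a network map assigning to each weight matrix W' ∈ ℝ^{L×P} a function f(·; W') : X → ℝ^{m} on a set X, and suppose f is K-Lipschitz in its weights uniformly over inputs, i.e., for all W₁, W₂ ∈ ℝ^{L×P} and all x ∈ X, ‖f(x; W₁) − f(x; W₂)‖ ≤ K·‖W₁ − W₂‖_F for some constant K > 0. Fix a target weight matrix W ∈ ℝ^{L×P} and an error tolerance ε > 0. If the number of templates N satisfies Σ_{j=N+1}^{min(L·B, A)} σ_j(R(W))² ≤ ε²/K², then there exist templates T₁, …, T_N ∈ ℝ^{1×A} and scalers S₁, …, S_N ∈ ℝ^{L×B} such that, setting W_⋆ = Σ_{i=1}^{N} T_i ⊗ S_i, one has sup_{x ∈ X} ‖f(x; W_⋆) − f(x; W)‖ ≤ ε. -/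
/-!
The rearrangement `R` is a Frobenius isometry sending `T ⊗ S` to the rank-one matrix
`vec(S) T`, so sums of `N` Kronecker products are exactly the preimages of sums of `N` rank-one
matrices. Truncating the expansion of `R(W)` in an orthonormal eigenbasis of `R(W)ᵀ R(W)` to
the `N` largest eigenvalues leaves a squared Frobenius error equal to the tail `∑_{j > N} σ_j²`
(the terms past `min (L·B) A` vanish because `rank R(W) ≤ L·B`), which is at most `ε² / K²`;
the Lipschitz bound turns this into the uniform error `ε`.
-/

open Matrix

noncomputable section

/-- `svals M j` is the `j`-th largest singular value (1-based index `j`) of the real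
matrix `M`: the square root of the `j`-th largest eigenvalue of `MᵀM`. -/
def svals {m n : ℕ} (M : Matrix (Fin m) (Fin n) ℝ) : ℕ → ℝ := fun j =>
  Real.sqrt
    ((((List.ofFn
        ((show (Mᵀ * M).IsHermitian by
            rw [← Matrix.conjTranspose_eq_transpose_of_trivial]
            exact Matrix.isHermitian_conjTranspose_mul_self M).eigenvalues)).insertionSort
        (· ≤ ·)).reverse).getD (j - 1) 0)

open Finset

theorem frobNorm_sq {m n : ℕ} (M : Matrix (Fin m) (Fin n) ℝ) :
    frobNorm M ^ 2 = ∑ i, ∑ j, M i j ^ 2 :=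
  Real.sq_sqrt (by positivity)

theorem mul_le_of_sq_le_div_sq {K x ε : ℝ} (hε : 0 ≤ ε) (h : x ^ 2 ≤ ε ^ 2 / K ^ 2) :
    K * x ≤ ε := by
  have hsq : (K * x) ^ 2 ≤ ε ^ 2 := by
    rcases eq_or_ne K 0 with rfl | hK
    · simp [sq_nonneg ε]
    · calc (K * x) ^ 2 = K ^ 2 * x ^ 2 := by ring
        _ ≤ K ^ 2 * (ε ^ 2 / K ^ 2) := by gcongr
        _ = ε ^ 2 := by field_simp
  exact (le_abs_self _).trans (abs_le_of_sq_le_sq hsq hε)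

section Rearrange

variable {L A B : ℕ}

theorem frobNorm_rearrange (V : Matrix (Fin L) (Fin (A * B)) ℝ) :
    frobNorm (rearrange L A B V) = frobNorm V := by
  unfold frobNorm
  congr 1
  rw [← finProdFinEquiv.sum_comp]
  conv_rhs => enter [2, ℓ]; rw [← finProdFinEquiv.sum_comp]
  simp only [Fintype.sum_prod_type, rearrange, pairIdx, Equiv.symm_apply_apply]
  exact sum_congr rfl fun ℓ _ => sum_comm

theorem rearrange_sub (V W : Matrix (Fin L) (Fin (A * B)) ℝ) :
    rearrange L A B (V - W) = rearrange L A B V - rearrange L A B W :=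
  rfl

theorem rearrange_sum {N : ℕ} (V : Fin N → Matrix (Fin L) (Fin (A * B)) ℝ) :
    rearrange L A B (∑ i, V i) = ∑ i, rearrange L A B (V i) := by
  ext r a
  simp only [rearrange, Matrix.sum_apply]

theorem rearrange_kron (u : Fin (L * B) → ℝ) (v : Fin A → ℝ) :
    rearrange L A B (kron (replicateRow (Fin 1) v) (of fun ℓ b => u (finProdFinEquiv (ℓ, b))))
      = vecMulVec u v := by
  ext r a
  simp only [rearrange, kron, pairIdx, Equiv.symm_apply_apply, of_apply, replicateRow_apply,
    Prod.mk.eta, Equiv.apply_symm_apply, vecMulVec_apply, mul_comm]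

end Rearrange

section Truncation

variable {m n : Type*} [Fintype m] [Fintype n]

open scoped RealInnerProductSpace

theorem sum_sq_sum_vecMulVec_sub [DecidableEq n] (M : Matrix m n ℝ)
    (b : OrthonormalBasis n ℝ (EuclideanSpace ℝ n)) (s : Finset n) :
    ∑ r, ∑ a, (∑ j ∈ s, vecMulVec (M *ᵥ ⇑(b j)) ⇑(b j) - M) r a ^ 2
      = ∑ j ∈ sᶜ, ∑ r, (M *ᵥ ⇑(b j)) r ^ 2 := by
  rw [sum_comm (s := sᶜ)]
  refine sum_congr rfl fun r _ => ?_
  set x : EuclideanSpace ℝ n := WithLp.toLp 2 (M r)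
  have hcoef : ∀ j, (M *ᵥ ⇑(b j)) r = ⟪b j, x⟫ := fun j => by
    simp [x, mulVec, EuclideanSpace.inner_eq_star_dotProduct]
  have hrow : ∀ a, (∑ j ∈ s, vecMulVec (M *ᵥ ⇑(b j)) ⇑(b j) - M) r a
      = -(∑ j ∈ sᶜ, ⟪b j, x⟫ • b j) a := fun a => by
    have hx : M r a = (∑ j ∈ sᶜ, ⟪b j, x⟫ • b j + ∑ j ∈ s, ⟪b j, x⟫ • b j) a := by
      rw [sum_compl_add_sum, b.sum_repr' x]
    simp [hx, Matrix.sum_apply, vecMulVec_apply, hcoef, WithLp.ofLp_sum]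
  calc ∑ a, (∑ j ∈ s, vecMulVec (M *ᵥ ⇑(b j)) ⇑(b j) - M) r a ^ 2
      = ‖∑ j ∈ sᶜ, ⟪b j, x⟫ • b j‖ ^ 2 := by
        simp [hrow, EuclideanSpace.norm_sq_eq]
    _ = ∑ j ∈ sᶜ, (M *ᵥ ⇑(b j)) r ^ 2 := by
        rw [← real_inner_self_eq_norm_sq, b.orthonormal.inner_sum]
        simp [hcoef, sq]

theorem sum_sq_mulVec_eigenvectorBasis [DecidableEq n] (M : Matrix m n ℝ)
    (h : (Mᵀ * M).IsHermitian) (j : n) :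
    ∑ r, (M *ᵥ ⇑(h.eigenvectorBasis j)) r ^ 2 = h.eigenvalues j := by
  set v := ⇑(h.eigenvectorBasis j)
  have hv : v ⬝ᵥ v = 1 := by
    have := real_inner_self_eq_norm_sq (h.eigenvectorBasis j)
    rw [h.eigenvectorBasis.orthonormal.1 j, EuclideanSpace.inner_eq_star_dotProduct] at this
    simpa using this
  calc ∑ r, (M *ᵥ v) r ^ 2 = (M *ᵥ v) ⬝ᵥ (M *ᵥ v) := by simp [dotProduct, sq]
    _ = ((Mᵀ * M) *ᵥ v) ⬝ᵥ v := by
        rw [dotProduct_mulVec, ← mulVec_transpose, mulVec_mulVec]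
    _ = h.eigenvalues j := by
        rw [h.mulVec_eigenvectorBasis, smul_dotProduct, hv, smul_eq_mul, mul_one]

end Truncation

theorem sum_fin_eq_sum_fin_filter_lt {M : Type*} [AddCommMonoid M] (G : ℕ → M) {N q : ℕ}
    (hG : ∀ k, q ≤ k → G k = 0) :
    ∑ i : Fin N, G i = ∑ k : Fin q with k.val < N, G k := by
  rw [Fin.sum_univ_eq_sum_range G, sum_filter,
    Fin.sum_univ_eq_sum_range (fun k => if k < N then G k else 0), ← sum_filter,
    ← sum_filter_of_ne (p := (· < q)) fun k _ hk => not_le.1 fun hqk => hk (hG k hqk)]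
  congr 1
  ext k
  simp only [mem_filter, mem_range]
  omega

theorem sum_fin_filter_le_eq_sum_Icc {M : Type*} [AddCommMonoid M] (F : ℕ → M) (N q : ℕ) :
    ∑ k : Fin q with N ≤ k.val, F (k + 1) = ∑ j ∈ Icc (N + 1) q, F j := by
  refine sum_bij (fun k _ => k.val + 1) ?_ ?_ ?_ fun _ _ => rfl
  · intro k hk
    simp only [mem_filter, mem_univ, true_and, mem_Icc] at hk ⊢
    omega
  · exact fun k _ k' _ hkk' => Fin.ext (Nat.succ_injective hkk')
  · intro j hj
    simp only [mem_Icc] at hj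
    refine ⟨⟨j - 1, by omega⟩, ?_, show j - 1 + 1 = j by omega⟩
    simp only [mem_filter, mem_univ, true_and]
    omega

theorem posSemidef_transpose_mul_self {m n : Type*} [Fintype m] [Fintype n] (M : Matrix m n ℝ) :
    (Mᵀ * M).PosSemidef := by
  simpa using posSemidef_conjTranspose_mul_self M

theorem exists_perm_antitone {α : Type*} [LinearOrder α] {q : ℕ} (f : Fin q → α) :
    ∃ τ : Equiv.Perm (Fin q), Antitone (f ∘ τ) :=
  ⟨Fin.revPerm.trans (Tuple.sort f), (Tuple.monotone_sort f).comp_antitone Fin.rev_anti⟩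

section SingularValues

variable {p q : ℕ} (M : Matrix (Fin p) (Fin q) ℝ) (h : (Mᵀ * M).IsHermitian)
  {τ : Equiv.Perm (Fin q)}

theorem svals_eq_sqrt_getD (hτ : Antitone (h.eigenvalues ∘ τ)) (j : ℕ) :
    svals M j = √((List.ofFn (h.eigenvalues ∘ τ)).getD (j - 1) 0) := by
  have hsort : (List.ofFn h.eigenvalues).insertionSort (· ≤ ·)
      = (List.ofFn (h.eigenvalues ∘ τ)).reverse :=
    List.Perm.eq_of_pairwise' (List.pairwise_insertionSort _ _)
      (List.pairwise_reverse.2 hτ.sortedGE_ofFn.pairwise)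
      ((List.perm_insertionSort _ _).trans
        ((Equiv.Perm.ofFn_comp_perm τ _).symm.trans (List.reverse_perm _).symm))
  show √((((List.ofFn h.eigenvalues).insertionSort (· ≤ ·)).reverse).getD (j - 1) 0) = _
  rw [hsort, List.reverse_reverse]

theorem sq_svals_succ (hτ : Antitone (h.eigenvalues ∘ τ)) (k : Fin q) :
    svals M (k + 1) ^ 2 = h.eigenvalues (τ k) := by
  rw [svals_eq_sqrt_getD M h hτ, Nat.add_sub_cancel, List.getD_eq_getElem _ _ (by simp),
    List.getElem_ofFn]
  exact Real.sq_sqrt ((posSemidef_transpose_mul_self M).eigenvalues_nonneg _)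

theorem eigenvalues_perm_eq_zero_of_le (hτ : Antitone (h.eigenvalues ∘ τ)) {k : Fin q}
    (hk : p ≤ k) : h.eigenvalues (τ k) = 0 := by
  by_contra hne
  have hpos : 0 < h.eigenvalues (τ k) :=
    ((posSemidef_transpose_mul_self M).eigenvalues_nonneg _).lt_of_ne' hne
  have hsub : (Iic k).map τ.toEmbedding ⊆ ({i | h.eigenvalues i ≠ 0} : Finset (Fin q)) := by
    intro i hi
    obtain ⟨k', hk', rfl⟩ := mem_map.1 hi
    simpa using (hpos.trans_le (hτ (mem_Iic.1 hk'))).ne'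
  have hcard : k.val + 1 ≤ p :=
    calc k.val + 1 = #((Iic k).map τ.toEmbedding) := by simp
      _ ≤ #{i | h.eigenvalues i ≠ 0} := card_le_card hsub
      _ = (Mᵀ * M).rank := by rw [h.rank_eq_card_non_zero_eigs, Fintype.card_subtype]
      _ ≤ p := by rw [rank_transpose_mul_self]; exact rank_le_height M
  omega

theorem svals_eq_zero_of_lt {j : ℕ} (hj : p < j) : svals M j = 0 := by
  have h := (posSemidef_transpose_mul_self M).isHermitian
  obtain ⟨τ, hτ⟩ := exists_perm_antitone h.eigenvalues
  rw [svals_eq_sqrt_getD M h hτ]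
  by_cases hjq : j - 1 < q
  · have hk : p ≤ (⟨j - 1, hjq⟩ : Fin q) := show p ≤ j - 1 by omega
    rw [List.getD_eq_getElem _ _ (by simpa using hjq), List.getElem_ofFn, Function.comp_apply,
      eigenvalues_perm_eq_zero_of_le M h hτ hk, Real.sqrt_zero]
  · rw [List.getD_eq_default _ _ (by rw [List.length_ofFn]; omega), Real.sqrt_zero]

theorem sum_eigenvalues_perm_filter_le (hτ : Antitone (h.eigenvalues ∘ τ)) (N : ℕ) :
    ∑ k : Fin q with N ≤ k.val, h.eigenvalues (τ k)
      = ∑ j ∈ Icc (N + 1) (min p q), svals M j ^ 2 := by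
  calc ∑ k : Fin q with N ≤ k.val, h.eigenvalues (τ k)
      = ∑ k : Fin q with N ≤ k.val, svals M (k + 1) ^ 2 := by
        simp only [sq_svals_succ M h hτ]
    _ = ∑ j ∈ Icc (N + 1) q, svals M j ^ 2 :=
        sum_fin_filter_le_eq_sum_Icc (fun j => svals M j ^ 2) N q
    _ = ∑ j ∈ Icc (N + 1) (min p q), svals M j ^ 2 := by
        refine (sum_subset (Icc_subset_Icc_right (min_le_right _ _)) fun j hj hj' => ?_).symm
        simp only [mem_Icc, le_min_iff, not_and, not_le] at hj hj'
        rw [svals_eq_zero_of_lt M (not_le.1 fun hjp => (hj' hj.1 hjp).not_ge hj.2), sq, zero_mul]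

end SingularValues

theorem exists_sum_vecMulVec_frobNorm_sub_sq_eq {p q : ℕ} (M : Matrix (Fin p) (Fin q) ℝ)
    (N : ℕ) :
    ∃ (u : Fin N → Fin p → ℝ) (v : Fin N → Fin q → ℝ),
      frobNorm (∑ i, vecMulVec (u i) (v i) - M) ^ 2
        = ∑ j ∈ Icc (N + 1) (min p q), svals M j ^ 2 := by
  have h := (posSemidef_transpose_mul_self M).isHermitian
  obtain ⟨τ, hτ⟩ := exists_perm_antitone h.eigenvalues
  set b := h.eigenvectorBasis
  -- the `k`-th principal right singular vector, padded by zeros beyond `q`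
  set e : ℕ → Fin q → ℝ := fun k => if hk : k < q then ⇑(b (τ ⟨k, hk⟩)) else 0
  refine ⟨fun i => M *ᵥ e i, fun i => e i, ?_⟩
  have hsum : ∑ i : Fin N, vecMulVec (M *ᵥ e i) (e i)
      = ∑ j ∈ ({k | k.val < N} : Finset (Fin q)).map τ.toEmbedding,
          vecMulVec (M *ᵥ ⇑(b j)) ⇑(b j) := by
    have hpad : ∀ k, q ≤ k → vecMulVec (M *ᵥ e k) (e k) = 0 := fun k hk => by
      simp [e, hk.not_gt]
    rw [sum_fin_eq_sum_fin_filter_lt _ hpad, sum_map]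
    refine sum_congr rfl fun k _ => ?_
    simp [e, k.isLt]
  have hcompl : (({k | k.val < N} : Finset (Fin q)).map τ.toEmbedding)ᶜ
      = ({k | N ≤ k.val} : Finset (Fin q)).map τ.toEmbedding := by
    ext j
    simp [mem_map_equiv]
  rw [frobNorm_sq, hsum, sum_sq_sum_vecMulVec_sub, hcompl, sum_map,
    ← sum_eigenvalues_perm_filter_le M h hτ N]
  exact sum_congr rfl fun k _ => sum_sq_mulVec_eigenvectorBasis M h (τ k)

theorem exists_kron_sum_rearrange_eq {L A B N : ℕ} (u : Fin N → Fin (L * B) → ℝ)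
    (v : Fin N → Fin A → ℝ) :
    ∃ (T : Fin N → Matrix (Fin 1) (Fin A) ℝ) (S : Fin N → Matrix (Fin L) (Fin B) ℝ),
      rearrange L A B (∑ i, kron (T i) (S i)) = ∑ i, vecMulVec (u i) (v i) :=
  ⟨fun i => replicateRow (Fin 1) (v i), fun i => of fun ℓ b => u i (finProdFinEquiv (ℓ, b)),
    by simp only [rearrange_sum, rearrange_kron]⟩

theorem exists_kron_sum_frobNorm_sub_sq_eq (L A B N : ℕ) (W : Matrix (Fin L) (Fin (A * B)) ℝ) :
    ∃ (T : Fin N → Matrix (Fin 1) (Fin A) ℝ) (S : Fin N → Matrix (Fin L) (Fin B) ℝ),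
      frobNorm (∑ i, kron (T i) (S i) - W) ^ 2
        = ∑ j ∈ Icc (N + 1) (min (L * B) A), svals (rearrange L A B W) j ^ 2 := by
  obtain ⟨u, v, huv⟩ := exists_sum_vecMulVec_frobNorm_sub_sq_eq (rearrange L A B W) N
  obtain ⟨T, S, hTS⟩ := exists_kron_sum_rearrange_eq u v
  exact ⟨T, S, by rw [← frobNorm_rearrange, rearrange_sub, hTS, huv]⟩

theorem universal_approximation_kron_general (L A B N : ℕ) {X : Type*} {m : ℕ}
    (f : Matrix (Fin L) (Fin (A * B)) ℝ → X → EuclideanSpace ℝ (Fin m))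
    (K : ℝ)
    (hLip : ∀ (W₁ W₂ : Matrix (Fin L) (Fin (A * B)) ℝ) (x : X),
      ‖f W₁ x - f W₂ x‖ ≤ K * frobNorm (W₁ - W₂))
    (W : Matrix (Fin L) (Fin (A * B)) ℝ) (ε : ℝ) (hε : 0 < ε)
    (hsv : ∑ j ∈ Finset.Icc (N + 1) (min (L * B) A), svals (rearrange L A B W) j ^ 2 ≤
      ε ^ 2 / K ^ 2) :
    ∃ (T : Fin N → Matrix (Fin 1) (Fin A) ℝ) (S : Fin N → Matrix (Fin L) (Fin B) ℝ),
      ∀ x : X, ‖f (∑ i, kron (T i) (S i)) x - f W x‖ ≤ ε := by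
  obtain ⟨T, S, hTS⟩ := exists_kron_sum_frobNorm_sub_sq_eq L A B N W
  exact ⟨T, S, fun x => (hLip _ _ x).trans (mul_le_of_sq_le_div_sq hε.le (hTS ▸ hsv))⟩

/-- Universal Approximation under Kronecker Constraints: if the network map
is `K`-Lipschitz in its weights uniformly over inputs and the number of templates `N`
satisfies `Σ_{j=N+1}^{min(L·B,A)} σ_j(R(W))² ≤ ε²/K²`, then some `N`-term Kronecker
reconstruction `W_⋆` gives `sup_x ‖f(x; W_⋆) − f(x; W)‖ ≤ ε`. -/
theorem universal_approximation_kron (L A B N : ℕ) (hL : 0 < L) (hA : 0 < A) (hB : 0 < B)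
    (hN : 0 < N) {X : Type*} {m : ℕ}
    (f : Matrix (Fin L) (Fin (A * B)) ℝ → X → EuclideanSpace ℝ (Fin m))
    (K : ℝ) (hK : 0 < K)
    (hLip : ∀ (W₁ W₂ : Matrix (Fin L) (Fin (A * B)) ℝ) (x : X),
      ‖f W₁ x - f W₂ x‖ ≤ K * frobNorm (W₁ - W₂))
    (W : Matrix (Fin L) (Fin (A * B)) ℝ) (ε : ℝ) (hε : 0 < ε)
    (hsv : ∑ j ∈ Finset.Icc (N + 1) (min (L * B) A), svals (rearrange L A B W) j ^ 2 ≤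
      ε ^ 2 / K ^ 2) :
    ∃ (T : Fin N → Matrix (Fin 1) (Fin A) ℝ) (S : Fin N → Matrix (Fin L) (Fin B) ℝ),
      ∀ x : X, ‖f (∑ i, kron (T i) (S i)) x - f W x‖ ≤ ε :=
  universal_approximation_kron_general L A B N f K hLip W ε hε hsv
end
end
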